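/- For every 0 ≤ i ≤ s one has the equality of ideals of ℤ[G]: Fitt_i(M_s(ν_1,…,ν_s,τ_1,…,τ_s)) = Σ_{j=0}^{s−i} Σ_a ν_{a_1}⋯ν_{a_j} · Fitt_i(N_{s−j}(τ_{a_{j+1}},…,τ_{a_s})), where for each j the inner sum runs over all subsets a = {a_1 < ⋯ < a_j} of {1,…,s} of cardinality j, and a_{j+1} < ⋯ < a_s are the elements of the complement of a. -/

import Mathlib

open MonoidAlgebra Finset

/-- The sum `ν_H = Σ_{σ ∈ H} σ` of the elements of a subgroup `H` in the group algebra. -/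
noncomputable def nuElt (R : Type) [CommRing R] {G : Type} [CommGroup G] [Fintype G]
    (H : Subgroup G) : MonoidAlgebra R G :=
  letI := Classical.decPred (· ∈ H)
  ∑ σ ∈ Finset.univ.filter (· ∈ H), MonoidAlgebra.of R G σ

/-- `Fitt_i(A)`: the ideal generated by the `(n-i) × (n-i)` minors of a matrix `A`
with `n` columns (so `Fitt_i(A) = (1)` for `i ≥ n`, and `(0)` if `A` has fewer than
`n - i` rows). -/
noncomputable def fittMat {R : Type} [CommRing R] {m n : Type} [Fintype m] [Fintype n]
    (A : Matrix m n R) (i : ℕ) : Ideal R :=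
  Ideal.span {x : R |
    ∃ (r : Fin (Fintype.card n - i) → m) (c : Fin (Fintype.card n - i) → n),
      x = (A.submatrix r c).det}

/-- The index type for the rows of `N_s`: pairs `l < l'`. -/
abbrev rowPairs (s : ℕ) := {p : Fin s × Fin s // p.1 < p.2}

/-- The matrix `N_s(t_1, …, t_s)`: row `(l, l')` has `-t_{l'}` in column `l`,
`t_l` in column `l'`, and `0` elsewhere. -/
noncomputable def Nmat {R : Type} [CommRing R] {s : ℕ} (t : Fin s → R) :
    Matrix (rowPairs s) (Fin s) R :=
  fun p l => if l = p.val.1 then -t p.val.2 else if l = p.val.2 then t p.val.1 else 0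

/-- The matrix `M_s(ν_1, …, ν_s, τ_1, …, τ_s)`: `N_s(τ_1, …, τ_s)` with `s` extra rows
appended, the `l`-th of which has `ν_l` in column `l` and `0` elsewhere. -/
noncomputable def Mmat {R : Type} [CommRing R] {s : ℕ} (ν t : Fin s → R) :
    Matrix (Fin s ⊕ rowPairs s) (Fin s) R :=
  Sum.elim (fun l l' => if l' = l then ν l else 0) (Nmat t)

/-- `I = I_1 × ⋯ × I_s` where `I_l` is the (possibly trivial) cyclic subgroup generated
by `σ l`: every element of `I` is, in a unique way, the product of elements of the
subgroups `⟨σ l⟩`. -/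
def IsDecomp {G : Type} [CommGroup G] (I : Subgroup G) {s : ℕ} (σ : Fin s → G) : Prop :=
  (∀ l, σ l ∈ I) ∧
    ∀ g ∈ I, ∃! x : ∀ l, Subgroup.zpowers (σ l), (∏ l, ((x l : G))) = g

/-- The ideal `Z_i` generated by the products `ν_{l_1} ⋯ ν_{l_{s-i}}` over all
`(s-i)`-element subsets `{l_1 < ⋯ < l_{s-i}}` of `{1, …, s}`. -/
noncomputable def Zideal {G : Type} [CommGroup G] [Fintype G] {s : ℕ} (σ : Fin s → G)
    (i : ℕ) : Ideal (MonoidAlgebra ℤ G) :=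
  Ideal.span {x | ∃ T : Finset (Fin s), T.card = s - i ∧
    x = ∏ l ∈ T, nuElt ℤ (Subgroup.zpowers (σ l))}

/-- The augmentation-type kernel ideal `𝓘_H = ker(ℤ[G] → ℤ[G/H])`. -/
noncomputable def kerIdeal {G : Type} [CommGroup G] [Fintype G] (H : Subgroup G) :
    Ideal (MonoidAlgebra ℤ G) :=
  RingHom.ker (MonoidAlgebra.mapDomainRingHom ℤ (QuotientGroup.mk' H))

/-! A nonzero square minor of `M_s` uses some rows `ν_l e_l`, `l ∈ a`, together with the columns
`l ∈ a`; after reordering it is block triangular, equal to `∏_{l ∈ a} ν_l` times a minor of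
`N_s` whose columns avoid `a`. If a row `(l, l')` of that minor has an endpoint in `a`, say `l`,
the row is divisible by `τ_l` and the product dies because `ν_l τ_l = 0`; otherwise it is a minor
of `N_{s-|a|}` in the `τ_l`, `l ∉ a`. Conversely each such product is a minor of `M_s`. -/

open Matrix

section Minors

variable {R : Type} [CommRing R] {m n : Type}

def minorIdeal (A : Matrix m n R) (k : ℕ) : Ideal R :=
  Ideal.span {x | ∃ (r : Fin k → m) (c : Fin k → n), x = (A.submatrix r c).det}

theorem fittMat_eq_minorIdeal [Fintype m] [Fintype n] (A : Matrix m n R) (i : ℕ) :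
    fittMat A i = minorIdeal A (Fintype.card n - i) :=
  rfl

theorem det_submatrix_mem_minorIdeal {κ : Type} [Fintype κ] [DecidableEq κ]
    (A : Matrix m n R) (r : κ → m) (c : κ → n) :
    (A.submatrix r c).det ∈ minorIdeal A (Fintype.card κ) := by
  let e := (Fintype.equivFin κ).symm
  refine Ideal.subset_span ⟨r ∘ e, c ∘ e, ?_⟩
  exact (det_submatrix_equiv_self e (A.submatrix r c)).symm

theorem det_submatrix_equiv_mem_iff [Fintype n] [DecidableEq n] {κ : Type} [Fintype κ]
    [DecidableEq κ] (A : Matrix n n R) (e f : κ ≃ n) (J : Ideal R) :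
    (A.submatrix e f).det ∈ J ↔ A.det ∈ J := by
  have h : A.submatrix e f = (A.submatrix e e).submatrix id (f.trans e.symm) := by
    ext; simp
  rw [h, det_permute', det_submatrix_equiv_self]
  rcases Int.units_eq_one_or (Equiv.Perm.sign (f.trans e.symm)) with h1 | h1 <;>
    simp [h1, neg_mem_iff]

theorem dvd_det_of_forall_dvd_row [Fintype n] [DecidableEq n] (A : Matrix n n R) (i : n)
    (x : R) (h : ∀ j, x ∣ A i j) : x ∣ A.det := by
  choose v hv using h
  have hrow : A i = x • v := funext hv
  rw [← updateRow_eq_self A i, hrow, det_updateRow_smul]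
  exact dvd_mul_right _ _

end Minors

theorem Function.Injective.exists_sumEquiv_inl_eq {α β γ : Type} [Fintype α] [Fintype β]
    [Fintype γ] {f : α → γ} (hf : Function.Injective f)
    (h : Fintype.card α + Fintype.card β = Fintype.card γ) :
    ∃ e : α ⊕ β ≃ γ, ∀ a, e (Sum.inl a) = f a := by
  classical
  have hcard : Fintype.card β = Fintype.card ↥(Set.range f)ᶜ := by
    rw [Fintype.card_compl_set, Set.card_range_of_injective hf]; omega
  refine ⟨(Equiv.sumCongr (Equiv.ofInjective f hf) (Fintype.equivOfCardEq hcard)).trans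
    (Equiv.Set.sumCompl (Set.range f)), fun a => ?_⟩
  simp

section Presentation

variable {R : Type} [CommRing R] {s : ℕ} (ν t : Fin s → R)

def rowPairs.map {n : ℕ} (e : Fin n ↪o Fin s) (p : rowPairs n) : rowPairs s :=
  ⟨(e p.1.1, e p.1.2), e.strictMono p.2⟩

theorem Nmat_comp_orderEmbedding {n : ℕ} (e : Fin n ↪o Fin s) :
    Nmat (t ∘ e) = (Nmat t).submatrix (rowPairs.map e) e := by
  ext p l
  simp [Nmat, rowPairs.map]

theorem det_Nmat_submatrix_mem_minorIdeal_comp {n : ℕ} (e : Fin n ↪o Fin s)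
    {κ : Type} [Fintype κ] [DecidableEq κ] (P : κ → rowPairs s) (Q : κ → Fin s)
    (hP : ∀ x, (P x).1.1 ∈ Set.range e ∧ (P x).1.2 ∈ Set.range e)
    (hQ : ∀ x, Q x ∈ Set.range e) :
    ((Nmat t).submatrix P Q).det ∈ minorIdeal (Nmat (t ∘ e)) (Fintype.card κ) := by
  choose P₁ hP₁ using fun x => (hP x).1
  choose P₂ hP₂ using fun x => (hP x).2
  choose Q' hQ' using hQ
  let P' : κ → rowPairs n := fun x =>
    ⟨(P₁ x, P₂ x), e.lt_iff_lt.mp (by rw [hP₁, hP₂]; exact (P x).2)⟩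
  have hPP' : rowPairs.map e ∘ P' = P := funext fun x => Subtype.ext (by
    simp [rowPairs.map, P', hP₁, hP₂])
  have hQQ' : e ∘ Q' = Q := funext hQ'
  rw [Nmat_comp_orderEmbedding, ← hPP', ← hQQ']
  exact det_submatrix_mem_minorIdeal _ P' Q'

theorem dvd_Nmat_apply_of_ne_fst {p : rowPairs s} {l : Fin s} (h : l ≠ p.1.1) :
    t p.1.1 ∣ Nmat t p l := by
  unfold Nmat
  split_ifs <;> simp_all

theorem dvd_Nmat_apply_of_ne_snd {p : rowPairs s} {l : Fin s} (h : l ≠ p.1.2) :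
    t p.1.2 ∣ Nmat t p l := by
  unfold Nmat
  split_ifs <;> simp

end Presentation

section Mmat

variable {R : Type} [CommRing R] {s : ℕ} (ν t : Fin s → R)

@[simp]
theorem Mmat_apply_inl (l l' : Fin s) : Mmat ν t (Sum.inl l) l' = if l' = l then ν l else 0 :=
  rfl

@[simp]
theorem Mmat_apply_inr (p : rowPairs s) (l : Fin s) : Mmat ν t (Sum.inr p) l = Nmat t p l :=
  rfl

theorem det_Mmat_submatrix_sumMap {κ₁ κ₂ : Type} [Fintype κ₁] [DecidableEq κ₁] [Fintype κ₂]
    [DecidableEq κ₂] {u : κ₁ → Fin s} (hu : Function.Injective u) (P : κ₂ → rowPairs s)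
    (Q : κ₂ → Fin s) (hQ : ∀ x y, Q x ≠ u y) :
    ((Mmat ν t).submatrix (Sum.map u P) (Sum.elim u Q)).det
      = (∏ x, ν (u x)) * ((Nmat t).submatrix P Q).det := by
  have h : (Mmat ν t).submatrix (Sum.map u P) (Sum.elim u Q)
      = fromBlocks (diagonal (ν ∘ u)) 0 ((Nmat t).submatrix P u) ((Nmat t).submatrix P Q) := by
    ext (x | x) (y | y) <;> simp [diagonal, hu.eq_iff, hQ, eq_comm]
  rw [h, det_fromBlocks_zero₁₂, det_diagonal]
  rfl

theorem span_prod_mul_minorIdeal_le (a : Finset (Fin s)) {k : ℕ} (hk : a.card ≤ k) :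
    Ideal.span {∏ l ∈ a, ν l} * minorIdeal (Nmat (t ∘ aᶜ.orderEmbOfFin rfl)) (k - a.card)
      ≤ minorIdeal (Mmat ν t) k := by
  rw [minorIdeal, Ideal.span_mul_span', Ideal.span_le]
  rintro _ ⟨_, rfl, _, ⟨r, c, rfl⟩, rfl⟩
  dsimp only
  set e := aᶜ.orderEmbOfFin rfl
  have hcompl : ∀ (x : Fin (k - a.card)) (y : a), e (c x) ≠ y := fun x y h =>
    Finset.mem_compl.mp (h ▸ aᶜ.orderEmbOfFin_mem rfl (c x)) y.2
  rw [Nmat_comp_orderEmbedding, submatrix_submatrix, ← Finset.prod_coe_sort a,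
    ← det_Mmat_submatrix_sumMap ν t Subtype.val_injective (rowPairs.map e ∘ r) (e ∘ c) hcompl]
  have hcard : Fintype.card (a ⊕ Fin (k - a.card)) = k := by
    rw [Fintype.card_sum, Fintype.card_coe, Fintype.card_fin]; omega
  have := det_submatrix_mem_minorIdeal (Mmat ν t)
    (Sum.map (Subtype.val : a → Fin s) (rowPairs.map e ∘ r)) (Sum.elim Subtype.val (e ∘ c))
  rwa [hcard] at this

variable {ν t}

theorem prod_mul_det_Nmat_submatrix_mem (hνt : ∀ l, ν l * t l = 0) (a : Finset (Fin s))
    {κ : Type} [Fintype κ] [DecidableEq κ] (P : κ → rowPairs s) (Q : κ → Fin s)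
    (hQ : ∀ x, Q x ∉ a) :
    (∏ l ∈ a, ν l) * ((Nmat t).submatrix P Q).det
      ∈ Ideal.span {∏ l ∈ a, ν l} *
          minorIdeal (Nmat (t ∘ aᶜ.orderEmbOfFin rfl)) (Fintype.card κ) := by
  by_cases hP : ∀ x, (P x).1.1 ∉ a ∧ (P x).1.2 ∉ a
  · refine Ideal.mul_mem_mul (Ideal.mem_span_singleton_self _) ?_
    exact det_Nmat_submatrix_mem_minorIdeal_comp t _ P Q (by simpa using hP) (by simpa using hQ)
  push Not at hP
  obtain ⟨x, hx⟩ := hP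
  obtain ⟨l, hla, hdvd⟩ : ∃ l ∈ a, t l ∣ ((Nmat t).submatrix P Q).det := by
    by_cases h₁ : (P x).1.1 ∈ a
    · exact ⟨_, h₁, dvd_det_of_forall_dvd_row _ x _ fun y =>
        dvd_Nmat_apply_of_ne_fst t fun h => hQ y (h ▸ h₁)⟩
    · exact ⟨_, hx h₁, dvd_det_of_forall_dvd_row _ x _ fun y =>
        dvd_Nmat_apply_of_ne_snd t fun h => hQ y (h ▸ hx h₁)⟩
  have hzero : (∏ l ∈ a, ν l) * ((Nmat t).submatrix P Q).det = 0 := by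
    rw [← zero_dvd_iff, ← hνt l]
    exact mul_dvd_mul (Finset.dvd_prod_of_mem ν hla) hdvd
  rw [hzero]
  exact zero_mem _

theorem det_Mmat_submatrix_mem_of_injective (hνt : ∀ l, ν l * t l = 0) {k : ℕ}
    {r : Fin k → Fin s ⊕ rowPairs s} {c : Fin k → Fin s} (hr : Function.Injective r)
    (hc : Function.Injective c) (hcols : ∀ p l, r p = Sum.inl l → l ∈ Set.range c) :
    ∃ a : Finset (Fin s), a.card ≤ k ∧ ((Mmat ν t).submatrix r c).det
      ∈ Ideal.span {∏ l ∈ a, ν l} *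
          minorIdeal (Nmat (t ∘ aᶜ.orderEmbOfFin rfl)) (k - a.card) := by
  classical
  let κ₁ := {p // ∃ l, r p = Sum.inl l}
  let κ₂ := {p // ¬∃ l, r p = Sum.inl l}
  choose u hu using fun p : κ₁ => p.2
  have hP : ∀ p : κ₂, ∃ q, r p = Sum.inr q := fun p => by
    cases h : r p.1 with
    | inl l => exact absurd ⟨l, h⟩ p.2
    | inr q => exact ⟨q, rfl⟩
  choose P hP using hP
  have hu_inj : Function.Injective u := fun p p' h => Subtype.ext (hr (by rw [hu, hu, h]))
  choose w hw using fun p : κ₁ => hcols p.1 (u p) (hu p)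
  have hw_inj : Function.Injective w := fun p p' h => hu_inj (by rw [← hw, ← hw, h])
  let φ : κ₁ ⊕ κ₂ ≃ Fin k := Equiv.sumCompl _
  obtain ⟨ψ, hψ⟩ := hw_inj.exists_sumEquiv_inl_eq (β := κ₂)
    (by rw [← Fintype.card_sum, Fintype.card_congr φ])
  let Q : κ₂ → Fin s := fun x => c (ψ (Sum.inr x))
  have hrφ : r ∘ φ = Sum.map u P := by
    funext p; rcases p with p | p
    exacts [hu p, hP p]
  have hcψ : c ∘ ψ = Sum.elim u Q := by
    funext p; rcases p with p | p <;> simp [hψ, hw, Q]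
  have hQ : ∀ x y, Q x ≠ u y := fun x y h =>
    Sum.inr_ne_inl (ψ.injective (hc (by rw [hψ, hw]; exact h)))
  let a : Finset (Fin s) := Finset.univ.map ⟨u, hu_inj⟩
  have hcard : a.card + Fintype.card κ₂ = k := by
    rw [Finset.card_map, Finset.card_univ, ← Fintype.card_sum, Fintype.card_congr φ,
      Fintype.card_fin]
  have hprod : ∏ x, ν (u x) = ∏ l ∈ a, ν l :=
    (Finset.prod_map Finset.univ ⟨u, hu_inj⟩ ν).symm
  refine ⟨a, by omega, ?_⟩
  rw [← det_submatrix_equiv_mem_iff _ φ ψ, submatrix_submatrix, hrφ, hcψ,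
    det_Mmat_submatrix_sumMap ν t hu_inj P Q hQ, hprod,
    show k - a.card = Fintype.card κ₂ by omega]
  exact prod_mul_det_Nmat_submatrix_mem hνt a P Q fun x => by
    simpa [a] using fun y => (hQ x y).symm

theorem det_Mmat_submatrix_mem (hνt : ∀ l, ν l * t l = 0) {k : ℕ}
    (r : Fin k → Fin s ⊕ rowPairs s) (c : Fin k → Fin s) :
    ∃ a : Finset (Fin s), a.card ≤ k ∧ ((Mmat ν t).submatrix r c).det
      ∈ Ideal.span {∏ l ∈ a, ν l} *
          minorIdeal (Nmat (t ∘ aᶜ.orderEmbOfFin rfl)) (k - a.card) := by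
  by_cases hgen : Function.Injective r ∧ Function.Injective c ∧
      ∀ p l, r p = Sum.inl l → l ∈ Set.range c
  · exact det_Mmat_submatrix_mem_of_injective hνt hgen.1 hgen.2.1 hgen.2.2
  suffices hdet : ((Mmat ν t).submatrix r c).det = 0 from ⟨∅, by simp, hdet ▸ zero_mem _⟩
  simp only [not_and_or, Function.not_injective_iff, not_forall] at hgen
  rcases hgen with ⟨p, p', hpp', hne⟩ | ⟨q, q', hqq', hne⟩ | ⟨p, l, hpl, hl⟩
  · exact det_zero_of_row_eq hne (by ext; simp [hpp'])
  · exact det_zero_of_column_eq hne (by simp [hqq'])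
  · exact det_eq_zero_of_row_eq_zero p fun q => by
      simp [hpl, show c q ≠ l from fun h => hl ⟨q, h⟩]

theorem minorIdeal_Mmat (hνt : ∀ l, ν l * t l = 0) (k : ℕ) :
    minorIdeal (Mmat ν t) k
      = ∑ j ∈ Finset.range (k + 1), ∑ a ∈ Finset.powersetCard j Finset.univ,
          Ideal.span {∏ l ∈ a, ν l} * minorIdeal (Nmat (t ∘ aᶜ.orderEmbOfFin rfl)) (k - j) := by
  refine le_antisymm ?_ ?_
  · rw [minorIdeal, Ideal.span_le]
    rintro _ ⟨r, c, rfl⟩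
    obtain ⟨a, hak, hmem⟩ := det_Mmat_submatrix_mem hνt r c
    simp only [Ideal.sum_eq_sup]
    refine SetLike.le_def.mp (Finset.le_sup (Finset.mem_range.mpr (Nat.lt_succ_of_le hak))) ?_
    exact SetLike.le_def.mp (Finset.le_sup (Finset.mem_powersetCard_univ.mpr rfl)) hmem
  · simp only [Ideal.sum_eq_sup, Finset.sup_le_iff, Finset.mem_range,
      Finset.mem_powersetCard_univ]
    rintro j hj a rfl
    exact span_prod_mul_minorIdeal_le ν t a (by omega)

end Mmat

theorem nuElt_zpowers_mul_of_sub_one_eq_zero {G : Type} [CommGroup G] [Fintype G] (g : G) :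
    nuElt ℤ (Subgroup.zpowers g) * (MonoidAlgebra.of ℤ G g - 1) = 0 := by
  rw [mul_sub, mul_one, sub_eq_zero, nuElt, Finset.sum_mul]
  refine Finset.sum_equiv (Equiv.mulRight g) (fun h => ?_) (fun h _ => ?_)
  · simp [mul_mem_cancel_right (Subgroup.mem_zpowers g)]
  · simp

theorem statement3 {G : Type} [CommGroup G] [Fintype G]
    {s : ℕ} (σ : Fin s → G) (i : ℕ) :
    fittMat (Mmat (fun l => nuElt ℤ (Subgroup.zpowers (σ l)))
        (fun l => MonoidAlgebra.of ℤ G (σ l) - 1)) i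
      = ∑ j ∈ Finset.range (s - i + 1),
          ∑ a ∈ Finset.powersetCard j (Finset.univ : Finset (Fin s)),
            Ideal.span {∏ k ∈ a, nuElt ℤ (Subgroup.zpowers (σ k))} *
              fittMat (Nmat (fun m : Fin (aᶜ).card =>
                MonoidAlgebra.of ℤ G (σ (((aᶜ).orderIsoOfFin rfl m : Fin s))) - 1)) i := by
  rw [fittMat_eq_minorIdeal, Fintype.card_fin,
    minorIdeal_Mmat (fun l => nuElt_zpowers_mul_of_sub_one_eq_zero (σ l))]
  refine Finset.sum_congr rfl fun j _ => Finset.sum_congr rfl fun a ha => ?_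
  rw [Finset.mem_powersetCard_univ] at ha
  rw [fittMat_eq_minorIdeal, Fintype.card_fin,
    show s - i - j = aᶜ.card - i by rw [Finset.card_compl, Fintype.card_fin, ha]; omega]
  rfl
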